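/- arXiv:1702.00681 — 2 statements merged into one kernel-verified Lean document; each statement's English description precedes it below -/
import Mathlib

section
/- For every real y > 0, the improper integral over the real line ∫_{-∞}^{∞} 4y / (((x-1)² + y²)(x² + y²)) dx equals 8π/(1 + 4y²). -/
/-! With `u = (x - a) ^ 2 + y ^ 2` and `v = (x - b) ^ 2 + y ^ 2` one has the partial-fraction
identity `((a - b) ^ 2 + 4 y ^ 2) / (u v) = 1 / u + 1 / v + (log v - log u)' / (a - b)`.
Since `log v - log u → 0` at `±∞`, the last term integrates to `0`, while
`∫ 1 / u = ∫ 1 / v = π / y`. The theorem is the case `a = 1`, `b = 0`. -/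

open Real MeasureTheory Filter Topology Bornology

theorem integrable_inv_sub_sq_add_sq (a : ℝ) {y : ℝ} (hy : y ≠ 0) :
    Integrable fun x : ℝ => ((x - a) ^ 2 + y ^ 2)⁻¹ := by
  have h := (integrable_inv_one_add_sq.comp_div hy).const_mul (y ^ 2)⁻¹
  refine (h.comp_sub_right a).congr (ae_of_all _ fun x => ?_)
  field_simp
  ring

theorem integral_inv_sub_sq_add_sq (a : ℝ) {y : ℝ} (hy : 0 < y) :
    ∫ x : ℝ, ((x - a) ^ 2 + y ^ 2)⁻¹ = π / y := by
  have h (x : ℝ) : (x ^ 2 + y ^ 2)⁻¹ = (y ^ 2)⁻¹ * (1 + (x / y) ^ 2)⁻¹ := by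
    field_simp
    ring
  rw [integral_sub_right_eq_self (fun x => (x ^ 2 + y ^ 2)⁻¹) a]
  simp_rw [h]
  rw [integral_const_mul, Measure.integral_comp_div (fun x => (1 + x ^ 2)⁻¹),
    integral_univ_inv_one_add_sq, abs_of_pos hy, smul_eq_mul]
  field_simp

theorem hasDerivAt_log_sub_sq_add_sq (a : ℝ) {y : ℝ} (hy : y ≠ 0) (x : ℝ) :
    HasDerivAt (fun x => log ((x - a) ^ 2 + y ^ 2)) (2 * (x - a) / ((x - a) ^ 2 + y ^ 2)) x := by
  have h : HasDerivAt (fun x => (x - a) ^ 2 + y ^ 2) (2 * (x - a)) x := by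
    simpa using (((hasDerivAt_id' x).sub_const a).pow 2).add_const (y ^ 2)
  exact h.log (by positivity)

theorem log_sub_sq_add_sq_eq {a y x : ℝ} (hy : y ≠ 0) (hx : x ≠ 0) :
    log ((x - a) ^ 2 + y ^ 2) = log (x ^ 2) + log ((1 - a * x⁻¹) ^ 2 + (y * x⁻¹) ^ 2) := by
  rw [← log_mul (by positivity) (by positivity)]
  congr 1
  field_simp

theorem tendsto_log_sub_sq_add_sq_sub_log_cobounded (a b : ℝ) {y : ℝ} (hy : y ≠ 0) :
    Tendsto (fun x => log ((x - a) ^ 2 + y ^ 2) - log ((x - b) ^ 2 + y ^ 2))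
      (cobounded ℝ) (𝓝 0) := by
  -- after factoring `x ^ 2` out of both arguments, the difference is `g x⁻¹`
  set g : ℝ → ℝ := fun t => log ((1 - a * t) ^ 2 + (y * t) ^ 2) - log ((1 - b * t) ^ 2 + (y * t) ^ 2)
  have hg : ContinuousAt g 0 := by fun_prop (disch := simp)
  have h := hg.tendsto.comp tendsto_inv₀_cobounded
  rw [show g 0 = 0 by simp [g]] at h
  refine h.congr' ?_
  filter_upwards [eventually_ne_cobounded 0] with x hx
  simp only [Function.comp_apply, log_sub_sq_add_sq_eq hy hx]
  ring

theorem integrable_inv_mul_sub_sq_add_sq (a b : ℝ) {y : ℝ} (hy : y ≠ 0) :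
    Integrable fun x : ℝ => (((x - a) ^ 2 + y ^ 2) * ((x - b) ^ 2 + y ^ 2))⁻¹ := by
  refine ((integrable_inv_sub_sq_add_sq a hy).const_mul (y ^ 2)⁻¹).mono' (by fun_prop)
    (ae_of_all _ fun x => ?_)
  rw [norm_inv, Real.norm_of_nonneg (by positivity), ← mul_inv, mul_comm (y ^ 2)]
  gcongr
  exact le_add_of_nonneg_left (sq_nonneg _)

theorem hasDerivAt_log_sub_sq_add_sq_sub_log {a b y : ℝ} (hy : y ≠ 0) (x : ℝ) :
    HasDerivAt (fun x => log ((x - b) ^ 2 + y ^ 2) - log ((x - a) ^ 2 + y ^ 2))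
      ((a - b) * (((a - b) ^ 2 + 4 * y ^ 2) * (((x - a) ^ 2 + y ^ 2) * ((x - b) ^ 2 + y ^ 2))⁻¹
        - ((x - a) ^ 2 + y ^ 2)⁻¹ - ((x - b) ^ 2 + y ^ 2)⁻¹)) x := by
  refine ((hasDerivAt_log_sub_sq_add_sq b hy x).sub
    (hasDerivAt_log_sub_sq_add_sq a hy x)).congr_deriv ?_
  have : (x - a) ^ 2 + y ^ 2 ≠ 0 := by positivity
  have : (x - b) ^ 2 + y ^ 2 ≠ 0 := by positivity
  field_simp
  ring

theorem integral_inv_mul_sub_sq_add_sq {a b y : ℝ} (hab : a ≠ b) (hy : 0 < y) :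
    ∫ x : ℝ, (((x - a) ^ 2 + y ^ 2) * ((x - b) ^ 2 + y ^ 2))⁻¹ =
      2 * π / (y * ((a - b) ^ 2 + 4 * y ^ 2)) := by
  have hf := integrable_inv_mul_sub_sq_add_sq a b hy.ne'
  have hu := integrable_inv_sub_sq_add_sq a hy.ne'
  have hv := integrable_inv_sub_sq_add_sq b hy.ne'
  have hlim := tendsto_log_sub_sq_add_sq_sub_log_cobounded b a hy.ne'
  rw [Metric.cobounded_eq_cocompact] at hlim
  have h := integral_of_hasDerivAt_of_tendsto (hasDerivAt_log_sub_sq_add_sq_sub_log hy.ne')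
    (by fun_prop) (hlim.mono_left atBot_le_cocompact)
    (hlim.mono_left atTop_le_cocompact)
  rw [integral_const_mul, integral_sub, integral_sub, integral_const_mul, integral_inv_sub_sq_add_sq a hy,
    integral_inv_sub_sq_add_sq b hy, sub_self, mul_eq_zero] at h
  · rw [eq_div_iff (by positivity)]
    field_simp at h ⊢
    linarith [h.resolve_left (sub_ne_zero.mpr hab)]
  all_goals fun_prop

/-- Integrating out the real part of the Kontsevich weight integrand of the wedge
graph: for every `y > 0`, `∫_{-∞}^{∞} 4y/(((x-1)²+y²)(x²+y²)) dx = 8π/(1+4y²)`. -/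
theorem wedge_integrand_x_integral (y : ℝ) (hy : 0 < y) :
    (∫ x : ℝ, 4 * y / (((x - 1) ^ 2 + y ^ 2) * (x ^ 2 + y ^ 2))) =
      8 * π / (1 + 4 * y ^ 2) := by
  have h (x : ℝ) : 4 * y / (((x - 1) ^ 2 + y ^ 2) * (x ^ 2 + y ^ 2)) =
      4 * y * (((x - 1) ^ 2 + y ^ 2) * ((x - 0) ^ 2 + y ^ 2))⁻¹ := by
    rw [sub_zero, div_eq_mul_inv]
  simp_rw [h, integral_const_mul, integral_inv_mul_sub_sq_add_sq one_ne_zero hy]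
  field_simp
  ring
end

section
/- Let p, q : ℝ³ → ℝ be smooth, and define {u,v} = p · det(∂(q,u,v)/∂(x,y,z)), i.e. p times the 3×3 Jacobian determinant whose rows are the gradients of q, u, v with respect to the coordinates (x,y,z). Then {·,·} is a Poisson bracket: it is bilinear, skew-symmetric, a derivation in each argument, and satisfies the Jacobi identity {u,{v,w}} + {v,{w,u}} + {w,{u,v}} = 0 for all smooth u, v, w : ℝ³ → ℝ. -/
/-- The `i`-th partial derivative of a function on `ℝ^d`. -/
noncomputable def pd {d : ℕ} (i : Fin d) (f : (Fin d → ℝ) → ℝ) : (Fin d → ℝ) → ℝ :=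
  fun x => fderiv ℝ f x (Pi.single i 1)

@[fun_prop]
lemma pd_contDiff {d : ℕ} {f : (Fin d → ℝ) → ℝ} (hf : ContDiff ℝ (⊤ : ℕ∞) f) (i : Fin d) :
    ContDiff ℝ (⊤ : ℕ∞) (pd i f) := by
  have h : ContDiff ℝ (⊤ : ℕ∞) (fderiv ℝ f) := hf.fderiv_right (by simp)
  exact h.clm_apply contDiff_const

@[fun_prop]
lemma pd_differentiable {d : ℕ} {f : (Fin d → ℝ) → ℝ} (hf : ContDiff ℝ (⊤ : ℕ∞) f) (i : Fin d) :
    Differentiable ℝ (pd i f) := (pd_contDiff hf i).differentiable (by simp)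

lemma pd_add {d : ℕ} {f g : (Fin d → ℝ) → ℝ} {x} (hf : DifferentiableAt ℝ f x)
    (hg : DifferentiableAt ℝ g x) (i : Fin d) :
    pd i (fun y => f y + g y) x = pd i f x + pd i g x := by
  simp [pd, fderiv_fun_add hf hg]

lemma pd_sub {d : ℕ} {f g : (Fin d → ℝ) → ℝ} {x} (hf : DifferentiableAt ℝ f x)
    (hg : DifferentiableAt ℝ g x) (i : Fin d) :
    pd i (fun y => f y - g y) x = pd i f x - pd i g x := by
  simp [pd, fderiv_fun_sub hf hg]

lemma pd_mul {d : ℕ} {f g : (Fin d → ℝ) → ℝ} {x} (hf : DifferentiableAt ℝ f x)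
    (hg : DifferentiableAt ℝ g x) (i : Fin d) :
    pd i (fun y => f y * g y) x = pd i f x * g x + f x * pd i g x := by
  simp [pd, fderiv_fun_mul hf hg]; ring

lemma pd_const_mul {d : ℕ} {f : (Fin d → ℝ) → ℝ} {x} (hf : DifferentiableAt ℝ f x)
    (c : ℝ) (i : Fin d) :
    pd i (fun y => c * f y) x = c * pd i f x := by
  simp [pd, fderiv_const_mul hf]

lemma pd_comm {d : ℕ} {f : (Fin d → ℝ) → ℝ} (hf : ContDiff ℝ (⊤ : ℕ∞) f) (i j : Fin d) (x) :
    pd i (pd j f) x = pd j (pd i f) x := by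
  have hsymm : IsSymmSndFDerivAt ℝ f x :=
    hf.contDiffAt.isSymmSndFDerivAt (by rw [minSmoothness_of_isRCLikeNormedField]; exact WithTop.coe_le_coe.mpr (le_top : (2 : ℕ∞) ≤ ⊤))
  have hdf : ContDiff ℝ (⊤ : ℕ∞) (fderiv ℝ f) := hf.fderiv_right (by simp)
  have key : ∀ (k l : Fin d),
      pd k (pd l f) x = fderiv ℝ (fderiv ℝ f) x (Pi.single k 1) (Pi.single l 1) := by
    intro k l
    have : pd l f = fun y => (fderiv ℝ f y) (Pi.single l 1) := rfl
    rw [pd, this, fderiv_clm_apply (hdf.differentiable (by simp) x) (differentiableAt_const _)]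
    simp
  rw [key, key, hsymm]

set_option maxHeartbeats 4000000 in
/-- For smooth `p, q : ℝ³ → ℝ`, the bracket
`{u,v} = p · det(∂(q,u,v)/∂(x,y,z))` is a Poisson bracket: it is bilinear,
skew-symmetric, a derivation in each argument, and satisfies the Jacobi identity
(all on smooth functions). -/
theorem jacobian_bracket_is_poisson (p q : (Fin 3 → ℝ) → ℝ)
    (hp : ContDiff ℝ (⊤ : ℕ∞) p) (hq : ContDiff ℝ (⊤ : ℕ∞) q)
    (br : ((Fin 3 → ℝ) → ℝ) → ((Fin 3 → ℝ) → ℝ) → (Fin 3 → ℝ) → ℝ)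
    (hbr : ∀ u v x, br u v x =
      p x * (!![pd 0 q x, pd 1 q x, pd 2 q x;
                pd 0 u x, pd 1 u x, pd 2 u x;
                pd 0 v x, pd 1 v x, pd 2 v x]).det) :
    -- bilinearity
    (∀ u v w, ContDiff ℝ (⊤ : ℕ∞) u → ContDiff ℝ (⊤ : ℕ∞) v → ContDiff ℝ (⊤ : ℕ∞) w →
      ∀ (c : ℝ) (x : Fin 3 → ℝ),
        br (fun y => u y + v y) w x = br u w x + br v w x ∧
        br u (fun y => v y + w y) x = br u v x + br u w x ∧
        br (fun y => c * u y) v x = c * br u v x ∧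
        br u (fun y => c * v y) x = c * br u v x) ∧
    -- skew-symmetry
    (∀ u v, ContDiff ℝ (⊤ : ℕ∞) u → ContDiff ℝ (⊤ : ℕ∞) v → ∀ x,
        br u v x = - br v u x) ∧
    -- Leibniz rule in each argument
    (∀ u v w, ContDiff ℝ (⊤ : ℕ∞) u → ContDiff ℝ (⊤ : ℕ∞) v → ContDiff ℝ (⊤ : ℕ∞) w →
      ∀ x,
        br u (fun y => v y * w y) x = v x * br u w x + w x * br u v x ∧
        br (fun y => u y * v y) w x = u x * br v w x + v x * br u w x) ∧
    -- Jacobi identity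
    (∀ u v w, ContDiff ℝ (⊤ : ℕ∞) u → ContDiff ℝ (⊤ : ℕ∞) v → ContDiff ℝ (⊤ : ℕ∞) w →
      ∀ x, br u (br v w) x + br v (br w u) x + br w (br u v) x = 0) := by
  have hp' : Differentiable ℝ p := hp.differentiable (by simp)
  have hq' : Differentiable ℝ q := hq.differentiable (by simp)
  have hbr' : ∀ u v x, br u v x = p x *
      (pd 0 q x * (pd 1 u x * pd 2 v x - pd 2 u x * pd 1 v x)
       - pd 1 q x * (pd 0 u x * pd 2 v x - pd 2 u x * pd 0 v x)
       + pd 2 q x * (pd 0 u x * pd 1 v x - pd 1 u x * pd 0 v x)) := by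
    intro u v x
    rw [hbr]
    congr 1
    rw [Matrix.det_fin_three]
    simp
    ring
  refine ⟨?_, ?_, ?_, ?_⟩
  · -- bilinearity
    intro u v w hu hv hw c x
    have hu' : Differentiable ℝ u := hu.differentiable (by simp)
    have hv' : Differentiable ℝ v := hv.differentiable (by simp)
    have hw' : Differentiable ℝ w := hw.differentiable (by simp)
    refine ⟨?_, ?_, ?_, ?_⟩ <;>
    · simp only [hbr']
      simp (disch := fun_prop) only [pd_add, pd_const_mul]
      ring
  · -- skew-symmetry
    intro u v hu hv x
    simp only [hbr']
    ring
  · -- Leibniz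
    intro u v w hu hv hw x
    have hu' : Differentiable ℝ u := hu.differentiable (by simp)
    have hv' : Differentiable ℝ v := hv.differentiable (by simp)
    have hw' : Differentiable ℝ w := hw.differentiable (by simp)
    refine ⟨?_, ?_⟩ <;>
    · simp only [hbr']
      simp (disch := fun_prop) only [pd_mul]
      ring
  · -- Jacobi
    intro u v w hu hv hw x
    have hu' : Differentiable ℝ u := hu.differentiable (by simp)
    have hv' : Differentiable ℝ v := hv.differentiable (by simp)
    have hw' : Differentiable ℝ w := hw.differentiable (by simp)
    have hvw : br v w = fun y => p y *
      (pd 0 q y * (pd 1 v y * pd 2 w y - pd 2 v y * pd 1 w y)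
       - pd 1 q y * (pd 0 v y * pd 2 w y - pd 2 v y * pd 0 w y)
       + pd 2 q y * (pd 0 v y * pd 1 w y - pd 1 v y * pd 0 w y)) := funext fun y => hbr' v w y
    have hwu : br w u = fun y => p y *
      (pd 0 q y * (pd 1 w y * pd 2 u y - pd 2 w y * pd 1 u y)
       - pd 1 q y * (pd 0 w y * pd 2 u y - pd 2 w y * pd 0 u y)
       + pd 2 q y * (pd 0 w y * pd 1 u y - pd 1 w y * pd 0 u y)) := funext fun y => hbr' w u y
    have huv : br u v = fun y => p y *
      (pd 0 q y * (pd 1 u y * pd 2 v y - pd 2 u y * pd 1 v y)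
       - pd 1 q y * (pd 0 u y * pd 2 v y - pd 2 u y * pd 0 v y)
       + pd 2 q y * (pd 0 u y * pd 1 v y - pd 1 u y * pd 0 v y)) := funext fun y => hbr' u v y
    rw [hbr' u (br v w) x, hbr' v (br w u) x, hbr' w (br u v) x, hvw, hwu, huv]
    simp (disch := fun_prop) only [pd_mul, pd_sub, pd_add]
    simp only [pd_comm hq 1 0 x, pd_comm hq 2 0 x, pd_comm hq 2 1 x,
      pd_comm hu 1 0 x, pd_comm hu 2 0 x, pd_comm hu 2 1 x,
      pd_comm hv 1 0 x, pd_comm hv 2 0 x, pd_comm hv 2 1 x,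
      pd_comm hw 1 0 x, pd_comm hw 2 0 x, pd_comm hw 2 1 x]
    ring
end
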